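/- arXiv:2008.06844 — 6 statements merged into one kernel-verified Lean document; each statement's English description precedes it below -/
import Mathlib

section
/- Let x*, y*, z* ∈ {0,1}^n be an optimal solution of the binary program BPD. Then for each i ∈ [n], z*_i = 1 if and only if x*_i = y*_i. -/
open Matrix Finset

def BinaryVec {n : ℕ} (x : Fin n → ℝ) : Prop := ∀ i, x i = 0 ∨ x i = 1

/-- Feasibility for BPD: `Ax ≤ b`, `Ay ≤ b`, `x + y - z ≤ e`, `-x - y - z ≤ -e`,
`x, y, z ∈ {0,1}ⁿ`. -/
def FeasBPD {n m : ℕ} (A : Matrix (Fin m) (Fin n) ℝ) (b : Fin m → ℝ)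
    (x y z : Fin n → ℝ) : Prop :=
  BinaryVec x ∧ BinaryVec y ∧ BinaryVec z ∧
  A.mulVec x ≤ b ∧ A.mulVec y ≤ b ∧
  (∀ i, x i + y i - z i ≤ 1) ∧ (∀ i, -x i - y i - z i ≤ -1)

/-- The BPD objective `cᵀ(x+y) - ε eᵀ z`. -/
def objBPD {n : ℕ} (c : Fin n → ℝ) (ε : ℝ) (x y z : Fin n → ℝ) : ℝ :=
  (∑ i, c i * (x i + y i)) - ε * ∑ i, z i

theorem stmt0 {n m : ℕ} (A : Matrix (Fin m) (Fin n) ℝ) (b : Fin m → ℝ)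
    (c : Fin n → ℝ) (ε : ℝ) (hε : 0 < ε)
    (x y z : Fin n → ℝ)
    (hfeas : FeasBPD A b x y z)
    (hopt : ∀ x' y' z', FeasBPD A b x' y' z' →
      objBPD c ε x' y' z' ≤ objBPD c ε x y z) :
    ∀ i, z i = 1 ↔ x i = y i := by
  obtain ⟨hx, hy, hz, hAx, hAy, h1, h2⟩ := hfeas
  intro i
  constructor
  · -- z i = 1 → x i = y i
    intro hzi
    by_contra hne
    -- then x i + y i = 1
    have hxy : x i + y i = 1 := by
      rcases hx i with h | h <;> rcases hy i with h' | h' <;>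
        simp [h, h'] at hne ⊢
    -- construct z' with z' i = 0
    set z' := Function.update z i 0 with hz'
    have hfeas' : FeasBPD A b x y z' := by
      refine ⟨hx, hy, ?_, hAx, hAy, ?_, ?_⟩
      · intro j
        by_cases hj : j = i
        · subst hj; simp [hz']
        · simpa [hz', Function.update_of_ne hj] using hz j
      · intro j
        by_cases hj : j = i
        · subst hj; simp [hz', hxy]
        · simpa [hz', Function.update_of_ne hj] using h1 j
      · intro j
        by_cases hj : j = i
        · subst hj; simp [hz']; linarith
        · simpa [hz', Function.update_of_ne hj] using h2 j
    have hle := hopt x y z' hfeas'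
    have hsum : ∑ j, z' j = (∑ j, z j) - z i := by
      have h1' : ∑ j, z' j = 0 + ∑ j ∈ Finset.univ \ {i}, z j := by
        simp only [hz']
        exact Finset.sum_update_of_mem (Finset.mem_univ i) z 0
      have h2' : ∑ j, z j = z i + ∑ j ∈ Finset.univ \ {i}, z j :=
        (Finset.sum_eq_add_sum_sdiff_singleton_of_mem (Finset.mem_univ i) z)
      linarith
    rw [objBPD, objBPD, hsum, hzi] at hle
    nlinarith
  · -- x i = y i → z i = 1
    intro hxy
    have h1i := h1 i
    have h2i := h2 i
    rcases hz i with hzi | hzi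
    · exfalso
      rcases hx i with h | h <;> rw [hxy] at h1i h2i <;>
        rcases hy i with h' | h' <;> simp [h', hzi] at h1i h2i <;> linarith
    · exact hzi
end

section
/- Let x*, y*, z* ∈ {0,1}^n be an optimal solution of the binary program BPD'. Then for each i ∈ [n], z*_i = 1 if and only if x*_i = y*_i = 1. -/
open Matrix Finset

/-- Feasibility for BPD': `Ax ≤ b`, `Ay ≤ b`, `x + y - z ≤ e`, `x, y, z ∈ {0,1}ⁿ`. -/
def FeasBPD' {n m : ℕ} (A : Matrix (Fin m) (Fin n) ℝ) (b : Fin m → ℝ)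
    (x y z : Fin n → ℝ) : Prop :=
  BinaryVec x ∧ BinaryVec y ∧ BinaryVec z ∧
  A.mulVec x ≤ b ∧ A.mulVec y ≤ b ∧
  (∀ i, x i + y i - z i ≤ 1)

theorem stmt1 {n m : ℕ} (A : Matrix (Fin m) (Fin n) ℝ) (b : Fin m → ℝ)
    (c : Fin n → ℝ) (ε : ℝ) (hε : 0 < ε)
    (x y z : Fin n → ℝ)
    (hfeas : FeasBPD' A b x y z)
    (hopt : ∀ x' y' z', FeasBPD' A b x' y' z' →
      objBPD c ε x' y' z' ≤ objBPD c ε x y z) :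
    ∀ i, z i = 1 ↔ (x i = 1 ∧ y i = 1) := by
  obtain ⟨hx, hy, hz, hAx, hAy, hcon⟩ := hfeas
  intro i
  constructor
  · -- z i = 1 → x i = 1 ∧ y i = 1
    intro hzi
    by_contra h
    -- consider z' = update z i 0
    set z' := Function.update z i 0 with hz'
    have hz'bin : BinaryVec z' := by
      intro j
      by_cases hj : j = i
      · subst hj; left; simp [hz']
      · simpa [hz', Function.update_of_ne hj] using hz j
    have hxy : x i + y i ≤ 1 := by
      rcases hx i with h1 | h1 <;> rcases hy i with h2 | h2
      · rw [h1, h2]; norm_num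
      · rw [h1, h2]; norm_num
      · rw [h1, h2]; norm_num
      · exact absurd ⟨h1, h2⟩ h
    have hcon' : ∀ j, x j + y j - z' j ≤ 1 := by
      intro j
      by_cases hj : j = i
      · subst hj; simp [hz', hxy]
      · simpa [hz', Function.update_of_ne hj] using hcon j
    have hfeas' : FeasBPD' A b x y z' := ⟨hx, hy, hz'bin, hAx, hAy, hcon'⟩
    have hle := hopt x y z' hfeas'
    have hsum : ∑ j, z' j = (∑ j, z j) - 1 := by
      have : ∑ j, z' j = ∑ j, (z j - if j = i then 1 else 0) := by
        apply Finset.sum_congr rfl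
        intro j _
        by_cases hj : j = i
        · subst hj; simp [hz', hzi]
        · simp [hz', Function.update_of_ne hj, hj]
      rw [this, Finset.sum_sub_distrib]
      simp
    have : objBPD c ε x y z' = objBPD c ε x y z + ε := by
      simp only [objBPD, hsum]; ring
    rw [this] at hle
    linarith
  · -- x i = 1 ∧ y i = 1 → z i = 1
    rintro ⟨hxi, hyi⟩
    have := hcon i
    rw [hxi, hyi] at this
    rcases hz i with h | h
    · rw [h] at this; linarith
    · exact h
end

section
/- There exists ε > 0 such that for every optimal solution x* ⊕ y* ⊕ z* of BPD, the optimal diameter of BP equals n − e^T z*, i.e., diam(BP) = n − e^T z*. -/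
/-!
The feasible set of BP is finite, so its objective values are separated by some gap `δ > 0`;
take `ε` with `ε n < δ`. For binary `u, v` the vector `z = 1 - (u - v)²` is the agreement
indicator of `u` and `v`, it makes `(u, v, z)` feasible for BPD with `eᵀ z = n - ‖u - v‖²`, and it
is the smallest `z` doing so. Since the penalty `ε eᵀ z` never exceeds `ε n < δ`, both halves of an
optimal solution of BPD are optimal for BP, and comparing it with `(u, v, 1 - (u - v)²)` for
optimal `u, v` shows that `n - eᵀ z` dominates every `‖u - v‖²` and is attained by `‖x - y‖²`.
-/

open Matrix Finset

/-- Feasibility for BP: `Ax ≤ b`, `x ∈ {0,1}ⁿ`. -/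
def FeasBP {n m : ℕ} (A : Matrix (Fin m) (Fin n) ℝ) (b : Fin m → ℝ)
    (x : Fin n → ℝ) : Prop :=
  BinaryVec x ∧ A.mulVec x ≤ b

/-- Optimality for BP with objective `cᵀ x`. -/
def OptBP {n m : ℕ} (A : Matrix (Fin m) (Fin n) ℝ) (b : Fin m → ℝ)
    (c : Fin n → ℝ) (x : Fin n → ℝ) : Prop :=
  FeasBP A b x ∧ ∀ x', FeasBP A b x' → ∑ i, c i * x' i ≤ ∑ i, c i * x i

/-- The set of squared distances `‖x* - y*‖²` between pairs of optimal solutions of BP;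
its greatest element is the optimal diameter `diam(BP)`. -/
def diamSet {n m : ℕ} (A : Matrix (Fin m) (Fin n) ℝ) (b : Fin m → ℝ)
    (c : Fin n → ℝ) : Set ℝ :=
  {r | ∃ x y, OptBP A b c x ∧ OptBP A b c y ∧ r = ∑ i, (x i - y i) ^ 2}

variable {n m : ℕ}

lemma BinaryVec.sum_nonneg {x : Fin n → ℝ} (hx : BinaryVec x) : 0 ≤ ∑ i, x i :=
  Finset.sum_nonneg fun i _ => by rcases hx i with h | h <;> simp [h]

lemma BinaryVec.sum_le_card {x : Fin n → ℝ} (hx : BinaryVec x) : ∑ i, x i ≤ n := by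
  calc ∑ i, x i ≤ ∑ _i : Fin n, (1 : ℝ) :=
        Finset.sum_le_sum fun i _ => by rcases hx i with h | h <;> simp [h]
    _ = n := by simp

lemma finite_setOf_binaryVec : {x : Fin n → ℝ | BinaryVec x}.Finite :=
  (Set.Finite.pi fun _ => Set.toFinite ({0, 1} : Set ℝ)).subset fun _ hx i _ => hx i

lemma Set.Finite.exists_pos_add_le_of_lt {s : Set ℝ} (hs : s.Finite) :
    ∃ δ > 0, ∀ a ∈ s, ∀ b ∈ s, a < b → a + δ ≤ b := by
  set gaps : Set ℝ := insert 1 {d | 0 < d ∧ ∃ a ∈ s, ∃ b ∈ s, d = b - a}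
  have hfin : gaps.Finite := by
    refine ((hs.image2 (fun a b => b - a) hs).subset ?_).insert 1
    rintro d ⟨-, a, ha, b, hb, rfl⟩
    exact ⟨a, ha, b, hb, rfl⟩
  obtain ⟨δ, hδ, hmin⟩ := Set.exists_min_image gaps id hfin ⟨1, Set.mem_insert _ _⟩
  refine ⟨δ, ?_, fun a ha b hb hab => ?_⟩
  · rcases hδ with rfl | ⟨hpos, -⟩
    exacts [one_pos, hpos]
  · have := hmin (b - a) (Or.inr ⟨sub_pos.mpr hab, a, ha, b, hb, rfl⟩)
    simp only [id] at this
    linarith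

lemma exists_pos_objective_gap (A : Matrix (Fin m) (Fin n) ℝ) (b : Fin m → ℝ)
    (c : Fin n → ℝ) : ∃ δ > 0, ∀ x x', FeasBP A b x → FeasBP A b x' →
      ∑ i, c i * x i < ∑ i, c i * x' i → ∑ i, c i * x i + δ ≤ ∑ i, c i * x' i := by
  have hfin : {x | FeasBP A b x}.Finite := finite_setOf_binaryVec.subset fun x hx => hx.1
  obtain ⟨δ, hδ, hgap⟩ := (hfin.image fun x => ∑ i, c i * x i).exists_pos_add_le_of_lt
  exact ⟨δ, hδ, fun x x' hx hx' => hgap _ ⟨x, hx, rfl⟩ _ ⟨x', hx', rfl⟩⟩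

/-- On binary vectors this is the indicator of the coordinates where `u` and `v` agree. -/
def agreement (u v : Fin n → ℝ) : Fin n → ℝ := fun i => 1 - (u i - v i) ^ 2

lemma sum_agreement (u v : Fin n → ℝ) :
    ∑ i, agreement u v i = n - ∑ i, (u i - v i) ^ 2 := by
  simp [agreement, Finset.sum_sub_distrib]

lemma BinaryVec.agreement {u v : Fin n → ℝ} (hu : BinaryVec u) (hv : BinaryVec v) :
    BinaryVec (agreement u v) := fun i => by
  rcases hu i with h | h <;> rcases hv i with h' | h' <;> simp [_root_.agreement, h, h']

lemma FeasBP.feasBPD_agreement {A : Matrix (Fin m) (Fin n) ℝ} {b : Fin m → ℝ}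
    {u v : Fin n → ℝ} (hu : FeasBP A b u) (hv : FeasBP A b v) :
    FeasBPD A b u v (agreement u v) := by
  refine ⟨hu.1, hv.1, hu.1.agreement hv.1, hu.2, hv.2, fun i => ?_, fun i => ?_⟩ <;>
  · rcases hu.1 i with h | h <;> rcases hv.1 i with h' | h' <;> norm_num [agreement, h, h']

lemma FeasBPD.agreement_le {A : Matrix (Fin m) (Fin n) ℝ} {b : Fin m → ℝ}
    {x y z : Fin n → ℝ} (h : FeasBPD A b x y z) (i : Fin n) : agreement x y i ≤ z i := by
  obtain ⟨hx, hy, hz, -, -, hupper, hlower⟩ := h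
  have := hupper i
  have := hlower i
  rcases hx i with h | h <;> rcases hy i with h' | h' <;> rcases hz i with h'' | h'' <;>
    simp_all [agreement]

lemma FeasBPD.card_sub_sum_sq_sub_le_sum {A : Matrix (Fin m) (Fin n) ℝ} {b : Fin m → ℝ}
    {x y z : Fin n → ℝ} (h : FeasBPD A b x y z) : n - ∑ i, (x i - y i) ^ 2 ≤ ∑ i, z i := by
  rw [← sum_agreement]
  exact Finset.sum_le_sum fun i _ => h.agreement_le i

lemma FeasBPD.symm {A : Matrix (Fin m) (Fin n) ℝ} {b : Fin m → ℝ} {x y z : Fin n → ℝ}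
    (h : FeasBPD A b x y z) : FeasBPD A b y x z := by
  obtain ⟨hx, hy, hz, hAx, hAy, hupper, hlower⟩ := h
  exact ⟨hy, hx, hz, hAy, hAx, fun i => by linarith [hupper i], fun i => by linarith [hlower i]⟩

lemma objBPD_eq (c : Fin n → ℝ) (ε : ℝ) (x y z : Fin n → ℝ) :
    objBPD c ε x y z = ∑ i, c i * x i + ∑ i, c i * y i - ε * ∑ i, z i := by
  simp [objBPD, mul_add, Finset.sum_add_distrib]

lemma objBPD_comm (c : Fin n → ℝ) (ε : ℝ) (x y z : Fin n → ℝ) :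
    objBPD c ε x y z = objBPD c ε y x z := by
  rw [objBPD_eq, objBPD_eq, add_comm (∑ i, c i * x i)]

def OptBPD (A : Matrix (Fin m) (Fin n) ℝ) (b : Fin m → ℝ) (c : Fin n → ℝ) (ε : ℝ)
    (x y z : Fin n → ℝ) : Prop :=
  FeasBPD A b x y z ∧
    ∀ x' y' z', FeasBPD A b x' y' z' → objBPD c ε x' y' z' ≤ objBPD c ε x y z

namespace OptBPD

variable {A : Matrix (Fin m) (Fin n) ℝ} {b : Fin m → ℝ} {c : Fin n → ℝ} {ε : ℝ}
  {x y z : Fin n → ℝ}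

lemma symm (h : OptBPD A b c ε x y z) : OptBPD A b c ε y x z :=
  ⟨h.1.symm, fun x' y' z' h' => by
    rw [objBPD_comm c ε y, objBPD_comm c ε x']
    exact h.2 y' x' z' h'.symm⟩

/-- A non-optimal `x` would lose at least `δ` in `cᵀ x`, more than the penalty can recover. -/
lemma optBP_left {δ : ℝ} (hε : 0 < ε) (hεδ : ε * n < δ)
    (hgap : ∀ x x', FeasBP A b x → FeasBP A b x' →
      ∑ i, c i * x i < ∑ i, c i * x' i → ∑ i, c i * x i + δ ≤ ∑ i, c i * x' i)
    (h : OptBPD A b c ε x y z) : OptBP A b c x := by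
  obtain ⟨⟨hx, hy, hz, hAx, hAy, -⟩, hmax⟩ := h
  refine ⟨⟨hx, hAx⟩, fun x' hx' => le_of_not_gt fun hlt => ?_⟩
  have hloss := hgap x x' ⟨hx, hAx⟩ hx' hlt
  have hcmp := hmax x' y _ (hx'.feasBPD_agreement ⟨hy, hAy⟩)
  rw [objBPD_eq, objBPD_eq] at hcmp
  have hpen : ε * ∑ i, agreement x' y i ≤ ε * n :=
    mul_le_mul_of_nonneg_left (hx'.1.agreement hy).sum_le_card hε.le
  linarith [mul_nonneg hε.le hz.sum_nonneg]

lemma sum_sq_sub_le (hε : 0 < ε) (h : OptBPD A b c ε x y z) {u v : Fin n → ℝ}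
    (hu : OptBP A b c u) (hv : OptBP A b c v) : ∑ i, (u i - v i) ^ 2 ≤ n - ∑ i, z i := by
  obtain ⟨⟨hx, hy, -, hAx, hAy, -⟩, hmax⟩ := h
  have hcmp := hmax u v _ (hu.1.feasBPD_agreement hv.1)
  rw [objBPD_eq, objBPD_eq, sum_agreement] at hcmp
  have : ε * ∑ i, z i ≤ ε * (n - ∑ i, (u i - v i) ^ 2) := by
    linarith [hu.2 x ⟨hx, hAx⟩, hv.2 y ⟨hy, hAy⟩]
  linarith [le_of_mul_le_mul_left this hε]

end OptBPD

theorem stmt3_general {n m : ℕ} (A : Matrix (Fin m) (Fin n) ℝ) (b : Fin m → ℝ)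
    (c : Fin n → ℝ) :
    ∃ ε > (0 : ℝ), ∀ x y z, FeasBPD A b x y z →
      (∀ x' y' z', FeasBPD A b x' y' z' →
        objBPD c ε x' y' z' ≤ objBPD c ε x y z) →
      IsGreatest (diamSet A b c) ((n : ℝ) - ∑ i, z i) := by
  obtain ⟨δ, hδ, hgap⟩ := exists_pos_objective_gap A b c
  have hε : 0 < δ / (n + 1) := by positivity
  have hεδ : δ / (n + 1) * n < δ := by
    rw [div_mul_eq_mul_div, div_lt_iff₀ (by positivity)]
    nlinarith
  refine ⟨δ / (n + 1), hε, fun x y z hfeas hmax => ?_⟩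
  have hopt : OptBPD A b c _ x y z := ⟨hfeas, hmax⟩
  have hx := hopt.optBP_left hε hεδ hgap
  have hy := hopt.symm.optBP_left hε hεδ hgap
  refine ⟨⟨x, y, hx, hy, ?_⟩, fun r ⟨u, v, hu, hv, hr⟩ => hr ▸ hopt.sum_sq_sub_le hε hu hv⟩
  linarith [hfeas.card_sub_sum_sq_sub_le_sum, hopt.sum_sq_sub_le hε hx hy]

theorem stmt3 {n m : ℕ} (A : Matrix (Fin m) (Fin n) ℝ) (b : Fin m → ℝ)
    (c : Fin n → ℝ) (hne : ∃ x, FeasBP A b x) :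
    ∃ ε > (0 : ℝ), ∀ x y z, FeasBPD A b x y z →
      (∀ x' y' z', FeasBPD A b x' y' z' →
        objBPD c ε x' y' z' ≤ objBPD c ε x y z) →
      IsGreatest (diamSet A b c) ((n : ℝ) - ∑ i, z i) :=
  stmt3_general A b c
end

section
/- Suppose the cost vector c is integer valued and set ε := 1/(2n). Then for every optimal solution x* ⊕ y* ⊕ z* of BPD, diam(BP) = n − e^T z*. -/
open Matrix Finset

lemma feasPair {n m : ℕ} {A : Matrix (Fin m) (Fin n) ℝ} {b : Fin m → ℝ}
    {x y : Fin n → ℝ} (hx : FeasBP A b x) (hy : FeasBP A b y) :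
    FeasBPD A b x y (fun i => 1 - (x i - y i)^2) := by
  obtain ⟨hxb, hxA⟩ := hx
  obtain ⟨hyb, hyA⟩ := hy
  refine ⟨hxb, hyb, ?_, hxA, hyA, ?_, ?_⟩ <;> intro i <;>
    rcases hxb i with h1 | h1 <;> rcases hyb i with h2 | h2 <;>
    simp [h1, h2] <;> norm_num

lemma zbound {n m : ℕ} {A : Matrix (Fin m) (Fin n) ℝ} {b : Fin m → ℝ}
    {x y z : Fin n → ℝ} (h : FeasBPD A b x y z) (i : Fin n) :
    1 - (x i - y i)^2 ≤ z i := by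
  obtain ⟨hxb, hyb, hzb, _, _, h1, h2⟩ := h
  have hz0 : 0 ≤ z i := by rcases hzb i with h|h <;> simp [h]
  have e1 := h1 i
  have e2 := h2 i
  rcases hxb i with hx|hx <;> rcases hyb i with hy|hy <;>
    rw [hx, hy] at e1 e2 ⊢ <;> nlinarith

lemma sum_int {n : ℕ} (c : Fin n → ℤ) {x : Fin n → ℝ} (hx : BinaryVec x) :
    ∃ k : ℤ, ∑ i, (c i : ℝ) * x i = (k : ℝ) := by
  classical
  refine ⟨∑ i, if x i = 1 then c i else 0, ?_⟩
  push_cast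
  refine Finset.sum_congr rfl fun i _ => ?_
  rcases hx i with h|h <;> norm_num [h]

lemma exists_opt {n m : ℕ} {A : Matrix (Fin m) (Fin n) ℝ} {b : Fin m → ℝ}
    (c : Fin n → ℝ) (hne : ∃ x, FeasBP A b x) :
    ∃ x, OptBP A b c x := by
  classical
  set f : (Fin n → Bool) → (Fin n → ℝ) := fun v i => if v i then 1 else 0 with hf
  have hrep : ∀ x : Fin n → ℝ, BinaryVec x →
      f (fun i => if x i = 1 then true else false) = x := by
    intro x hx; funext i
    rcases hx i with h|h <;> simp [hf, h]
  set S : Finset (Fin n → Bool) := Finset.univ.filter (fun v => FeasBP A b (f v)) with hS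
  have hmemS : ∀ x : Fin n → ℝ, FeasBP A b x →
      (fun i => if x i = 1 then true else false) ∈ S := by
    intro x hx
    refine Finset.mem_filter.mpr ⟨Finset.mem_univ _, ?_⟩
    rw [hrep x hx.1]; exact hx
  have hSne : S.Nonempty := by
    obtain ⟨x, hx⟩ := hne
    exact ⟨_, hmemS x hx⟩
  obtain ⟨v, hvS, hvmax⟩ := S.exists_max_image (fun v => ∑ i, c i * f v i) hSne
  refine ⟨f v, ?_, ?_⟩
  · simpa [hS] using hvS
  · intro x' hx'
    have := hvmax _ (hmemS x' hx')
    rwa [hrep x' hx'.1] at this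

theorem stmt4 {n m : ℕ} (A : Matrix (Fin m) (Fin n) ℝ) (b : Fin m → ℝ)
    (c : Fin n → ℤ) (hne : ∃ x, FeasBP A b x)
    (ε : ℝ) (hε : ε = 1 / (2 * n))
    (x y z : Fin n → ℝ) (hfeas : FeasBPD A b x y z)
    (hopt : ∀ x' y' z', FeasBPD A b x' y' z' →
      objBPD (fun i => (c i : ℝ)) ε x' y' z' ≤ objBPD (fun i => (c i : ℝ)) ε x y z) :
    IsGreatest (diamSet A b (fun i => (c i : ℝ))) ((n : ℝ) - ∑ i, z i) := by
  classical
  obtain ⟨hxb, hyb, hzb, hxA, hyA, hc1, hc2⟩ := hfeas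
  rcases Nat.eq_zero_or_pos n with hn | hn
  · subst hn
    constructor
    · exact ⟨x, y, ⟨⟨hxb, hxA⟩, fun x' _ => by simp⟩,
        ⟨⟨hyb, hyA⟩, fun x' _ => by simp⟩, by simp⟩
    · rintro r ⟨x', y', _, _, rfl⟩; simp
  have hε0 : 0 < ε := by
    rw [hε]; positivity
  set cc : Fin n → ℝ := fun i => (c i : ℝ) with hcc
  obtain ⟨x0, hx0⟩ := exists_opt (A := A) (b := b) cc hne
  have hsplit : ∀ u v : Fin n → ℝ,
      ∑ i, cc i * (u i + v i) = ∑ i, cc i * u i + ∑ i, cc i * v i := by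
    intro u v; simp [mul_add, Finset.sum_add_distrib]
  have hzsum_nonneg : 0 ≤ ∑ i, z i :=
    Finset.sum_nonneg fun i _ => by rcases hzb i with h|h <;> simp [h]
  have hfeas0 : FeasBPD A b x0 x0 (fun _ => 1) := by
    refine ⟨hx0.1.1, hx0.1.1, fun i => Or.inr rfl, hx0.1.2, hx0.1.2, ?_, ?_⟩ <;>
      intro i <;> rcases hx0.1.1 i with h|h <;> rw [h] <;> norm_num
  have hobj0 := hopt x0 x0 (fun _ => 1) hfeas0
  simp only [objBPD, hsplit] at hobj0
  have hen : ε * ∑ _i : Fin n, (1:ℝ) = 1/2 := by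
    rw [hε]
    rw [Finset.sum_const, Finset.card_univ, Fintype.card_fin]
    have : (n : ℝ) ≠ 0 := Nat.cast_ne_zero.mpr hn.ne'
    field_simp
    ring
  rw [hen] at hobj0
  have hεz : 0 ≤ ε * ∑ i, z i := mul_nonneg hε0.le hzsum_nonneg
  -- x and y are optimal for BP
  have hxopt : OptBP A b cc x := by
    refine ⟨⟨hxb, hxA⟩, ?_⟩
    by_contra hcon
    push_neg at hcon
    obtain ⟨x', hx'f, hx'⟩ := hcon
    have h1 : ∑ i, cc i * x i < ∑ i, cc i * x0 i := lt_of_lt_of_le hx' (hx0.2 x' hx'f)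
    obtain ⟨k1, hk1⟩ := sum_int c hxb
    obtain ⟨k0, hk0⟩ := sum_int c hx0.1.1
    have h2 : ∑ i, cc i * x i + 1 ≤ ∑ i, cc i * x0 i := by
      rw [hcc] at h1 ⊢
      rw [hk1, hk0] at h1 ⊢
      have : k1 < k0 := by exact_mod_cast h1
      have : k1 + 1 ≤ k0 := this
      exact_mod_cast this
    have hy' : ∑ i, cc i * y i ≤ ∑ i, cc i * x0 i := hx0.2 y ⟨hyb, hyA⟩
    linarith
  have hyopt : OptBP A b cc y := by
    refine ⟨⟨hyb, hyA⟩, ?_⟩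
    by_contra hcon
    push_neg at hcon
    obtain ⟨y', hy'f, hy'⟩ := hcon
    have h1 : ∑ i, cc i * y i < ∑ i, cc i * x0 i := lt_of_lt_of_le hy' (hx0.2 y' hy'f)
    obtain ⟨k1, hk1⟩ := sum_int c hyb
    obtain ⟨k0, hk0⟩ := sum_int c hx0.1.1
    have h2 : ∑ i, cc i * y i + 1 ≤ ∑ i, cc i * x0 i := by
      rw [hcc] at h1 ⊢
      rw [hk1, hk0] at h1 ⊢
      have : k1 < k0 := by exact_mod_cast h1
      have : k1 + 1 ≤ k0 := this
      exact_mod_cast this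
    have hx' : ∑ i, cc i * x i ≤ ∑ i, cc i * x0 i := hx0.2 x ⟨hxb, hxA⟩
    linarith
  -- z sums to n - ‖x-y‖²
  have hfz' : FeasBPD A b x y (fun i => 1 - (x i - y i)^2) :=
    feasPair ⟨hxb, hxA⟩ ⟨hyb, hyA⟩
  have h3 := hopt x y (fun i => 1 - (x i - y i)^2) hfz'
  simp only [objBPD] at h3
  have h4 : ∑ i, z i ≤ ∑ i, (1 - (x i - y i)^2) := by
    have hmul : ε * ∑ i, z i ≤ ε * ∑ i, (1 - (x i - y i)^2) := by linarith
    exact le_of_mul_le_mul_left hmul hε0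
  have h5 : ∑ i, (1 - (x i - y i)^2) ≤ ∑ i, z i :=
    Finset.sum_le_sum fun i _ => zbound ⟨hxb, hyb, hzb, hxA, hyA, hc1, hc2⟩ i
  have hkey : ∑ i, (1 - (x i - y i)^2) = (n : ℝ) - ∑ i, (x i - y i)^2 := by
    rw [Finset.sum_sub_distrib, Finset.sum_const, Finset.card_univ, Fintype.card_fin]
    simp
  have hzval : (n : ℝ) - ∑ i, z i = ∑ i, (x i - y i)^2 := by linarith
  constructor
  · exact ⟨x, y, hxopt, hyopt, hzval⟩
  · rintro r ⟨x', y', hx', hy', rfl⟩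
    have hfz'' := feasPair hx'.1 hy'.1
    have h6 := hopt x' y' _ hfz''
    simp only [objBPD, hsplit] at h6
    have e1 : ∑ i, cc i * x' i = ∑ i, cc i * x i :=
      le_antisymm (hxopt.2 x' hx'.1) (hx'.2 x hxopt.1)
    have e2 : ∑ i, cc i * y' i = ∑ i, cc i * y i :=
      le_antisymm (hyopt.2 y' hy'.1) (hy'.2 y hyopt.1)
    rw [e1, e2] at h6
    have hmul : ε * ∑ i, z i ≤ ε * ∑ i, (1 - (x' i - y' i)^2) := by linarith
    have h7 : ∑ i, z i ≤ ∑ i, (1 - (x' i - y' i)^2) := le_of_mul_le_mul_left hmul hε0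
    have hkey' : ∑ i, (1 - (x' i - y' i)^2) = (n : ℝ) - ∑ i, (x' i - y' i)^2 := by
      rw [Finset.sum_sub_distrib, Finset.sum_const, Finset.card_univ, Fintype.card_fin]
      simp
    linarith
end

section
/- Suppose c is integer valued and ε = 1/(2n). Then for every optimal solution x* ⊕ y* ⊕ z* of BPD' (BPD without the constraint −x−y−z ≤ −e), one has diam(BP) ≤ n − e^T z*. -/
open Matrix Finset

theorem stmt5 {n m : ℕ} (A : Matrix (Fin m) (Fin n) ℝ) (b : Fin m → ℝ)
    (c : Fin n → ℤ) (hne : ∃ x, FeasBP A b x)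
    (ε : ℝ) (hε : ε = 1 / (2 * n))
    (x y z : Fin n → ℝ) (hfeas : FeasBPD' A b x y z)
    (hopt : ∀ x' y' z', FeasBPD' A b x' y' z' →
      objBPD (fun i => (c i : ℝ)) ε x' y' z' ≤ objBPD (fun i => (c i : ℝ)) ε x y z)
    (D : ℝ) (hD : IsGreatest (diamSet A b (fun i => (c i : ℝ))) D) :
    D ≤ (n : ℝ) - ∑ i, z i := by
  obtain ⟨xs, ys, hxs, hys, hDeq⟩ := hD.1
  have hxb := hxs.1.1
  have hyb := hys.1.1
  set zs : Fin n → ℝ := fun i => xs i * ys i with hzs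
  have hfz : FeasBPD' A b xs ys zs := by
    refine ⟨hxb, hyb, ?_, hxs.1.2, hys.1.2, ?_⟩
    · intro i; rcases hxb i with h|h <;> rcases hyb i with h'|h' <;> simp [hzs, h, h']
    · intro i; rcases hxb i with h|h <;> rcases hyb i with h'|h' <;>
        simp [hzs, h, h'] <;> norm_num
  have hineq := hopt xs ys zs hfz
  have hx' : ∑ i, (c i:ℝ) * x i ≤ ∑ i, (c i:ℝ) * xs i :=
    hxs.2 x ⟨hfeas.1, hfeas.2.2.2.1⟩
  have hy' : ∑ i, (c i:ℝ) * y i ≤ ∑ i, (c i:ℝ) * ys i :=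
    hys.2 y ⟨hfeas.2.1, hfeas.2.2.2.2.1⟩
  have hzle : ∑ i, z i ≤ ∑ i, zs i := by
    rcases Nat.eq_zero_or_pos n with h0 | hn
    · subst h0; simp
    · have hεpos : 0 < ε := by
        rw [hε]; positivity
      have hsplit : ∀ u v : Fin n → ℝ,
          ∑ i, (c i:ℝ) * (u i + v i) = ∑ i, (c i:ℝ) * u i + ∑ i, (c i:ℝ) * v i := by
        intro u v
        rw [← Finset.sum_add_distrib]
        congr 1; ext i; ring
      unfold objBPD at hineq
      rw [hsplit, hsplit] at hineq
      have : ε * ∑ i, z i ≤ ε * ∑ i, zs i := by linarith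
      exact le_of_mul_le_mul_left this hεpos
  have hpt : ∀ i, (xs i - ys i) ^ 2 ≤ 1 - zs i := by
    intro i; rcases hxb i with h|h <;> rcases hyb i with h'|h' <;>
      simp [hzs, h, h'] <;> norm_num
  have hsum : ∑ i, (xs i - ys i) ^ 2 ≤ ∑ i, (1 - zs i) :=
    Finset.sum_le_sum fun i _ => hpt i
  have hval : ∑ i, (1 - zs i) = (n : ℝ) - ∑ i, zs i := by
    rw [Finset.sum_sub_distrib]; simp
  rw [hDeq]
  calc ∑ i, (xs i - ys i) ^ 2 ≤ (n:ℝ) - ∑ i, zs i := by rw [← hval]; exact hsum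
    _ ≤ (n:ℝ) - ∑ i, z i := by linarith
end

section
/- Let S denote the set of optimal permutations of LOP(a). Then the optimal diameter of LOP(a) equals twice the maximum Kendall tau distance over all pairs of optimal permutations: diam(LOP(a)) = 2·max_{σ₁,σ₂ ∈ S} K(σ₁, σ₂). -/
open Finset

/-- Feasibility for the linear ordering problem: binary off-diagonal entries,
`x_{ij} + x_{ji} = 1` for `i < j`, and the 3-dicycle inequalities. -/
def LOPFeas {n : ℕ} (x : Fin n × Fin n → ℝ) : Prop :=
  (∀ p : Fin n × Fin n, p.1 ≠ p.2 → (x p = 0 ∨ x p = 1)) ∧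
  (∀ i j : Fin n, i < j → x (i, j) + x (j, i) = 1) ∧
  (∀ i j k : Fin n, i < j → i < k → j ≠ k → x (i, j) + x (j, k) + x (k, i) ≤ 2)

/-- The incidence vector of a permutation: `x_{ij} = 1` iff `σ(i) < σ(j)`. -/
def permVec {n : ℕ} (σ : Equiv.Perm (Fin n)) : Fin n × Fin n → ℝ :=
  fun p => if σ p.1 < σ p.2 then 1 else 0

/-- The Kendall tau distance: the number of discordant pairs `(i,j)`, `i < j`. -/
def kendall {n : ℕ} (σ₁ σ₂ : Equiv.Perm (Fin n)) : ℕ :=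
  (Finset.univ.filter fun p : Fin n × Fin n => p.1 < p.2 ∧
    ((σ₁ p.1 < σ₁ p.2 ∧ σ₂ p.2 < σ₂ p.1) ∨ (σ₁ p.2 < σ₁ p.1 ∧ σ₂ p.1 < σ₂ p.2))).card

/-- Optimality for the linear ordering problem `LOP(a)`. -/
def LOPOpt {n : ℕ} (a : Fin n × Fin n → ℝ) (x : Fin n × Fin n → ℝ) : Prop :=
  LOPFeas x ∧ ∀ x', LOPFeas x' →
    (∑ p ∈ Finset.univ.filter fun p : Fin n × Fin n => p.1 ≠ p.2, a p * x' p) ≤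
      ∑ p ∈ Finset.univ.filter fun p : Fin n × Fin n => p.1 ≠ p.2, a p * x p

/-- A permutation is optimal for `LOP(a)` if its incidence vector is optimal. -/
def LOPOptPerm {n : ℕ} (a : Fin n × Fin n → ℝ) (σ : Equiv.Perm (Fin n)) : Prop :=
  LOPOpt a (permVec σ)

lemma permVec_feas {n : ℕ} (σ : Equiv.Perm (Fin n)) : LOPFeas (permVec σ) := by
  refine ⟨fun p _ => ?_, fun i j hij => ?_, fun i j k hij hik hjk => ?_⟩
  · unfold permVec; split_ifs <;> simp
  · have h : σ i ≠ σ j := fun h => hij.ne (σ.injective h)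
    unfold permVec
    rcases h.lt_or_gt with h1 | h1
    · rw [if_pos h1, if_neg (not_lt.2 h1.le)]; ring
    · rw [if_neg (not_lt.2 h1.le), if_pos h1]; ring
  · unfold permVec
    by_cases h1 : σ i < σ j <;> by_cases h2 : σ j < σ k <;> by_cases h3 : σ k < σ i <;>
      simp only [h1, h2, h3, if_true, if_false] <;>
      first
        | (exact absurd (h1.trans (h2.trans h3)) (lt_irrefl _))
        | norm_num

lemma exists_perm {n : ℕ} {x : Fin n × Fin n → ℝ} (hx : LOPFeas x) :
    ∃ σ : Equiv.Perm (Fin n), ∀ p : Fin n × Fin n, p.1 ≠ p.2 → x p = permVec σ p := by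
  obtain ⟨h01, hsum, hcyc⟩ := hx
  -- sum constraint for all distinct pairs
  have hsum' : ∀ i j : Fin n, i ≠ j → x (i, j) + x (j, i) = 1 := by
    intro i j hij
    rcases hij.lt_or_gt with h | h
    · exact hsum i j h
    · linarith [hsum j i h]
  have hone : ∀ i j : Fin n, i ≠ j → (x (i, j) = 1 ↔ ¬ x (j, i) = 1) := by
    intro i j hij
    have h1 := h01 (i, j) hij
    have h2 := h01 (j, i) (Ne.symm hij)
    have h3 := hsum' i j hij
    constructor
    · intro h hc; linarith
    · intro h; rcases h2 with h2 | h2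
      · linarith
      · exact absurd h2 h
  have cyc : ∀ i j k : Fin n, i ≠ j → j ≠ k → k ≠ i →
      x (i, j) + x (j, k) + x (k, i) ≤ 2 := by
    intro i j k hij hjk hki
    rcases hij.lt_or_gt with h1 | h1
    · rcases hki.lt_or_gt with h2 | h2
      · -- k < i < j : apply at k i j
        linarith [hcyc k i j h2 (h2.trans h1) hij]
      · -- i < j, i < k
        linarith [hcyc i j k h1 h2 hjk]
    · rcases hjk.lt_or_gt with h2 | h2
      · -- j < i, j < k : apply at j k i
        linarith [hcyc j k i h2 h1 hki]
      · -- k < j < i: apply at k i j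
        linarith [hcyc k i j (h2.trans h1) h2 hij]
  have htrans : ∀ i j k : Fin n, i ≠ j → j ≠ k → k ≠ i →
      x (i, j) = 1 → x (j, k) = 1 → x (i, k) = 1 := by
    intro i j k hij hjk hki hxij hxjk
    by_contra h
    have h0 : x (i, k) = 0 := (h01 (i, k) (Ne.symm hki)).resolve_right h
    have hki1 : x (k, i) = 1 := by linarith [hsum' i k (Ne.symm hki)]
    linarith [cyc i j k hij hjk hki]
  -- rank function
  set S : Fin n → Finset (Fin n) := fun i => univ.filter fun j => j ≠ i ∧ x (j, i) = 1 with hS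
  have hmono : ∀ i j : Fin n, i ≠ j → x (i, j) = 1 → (S i).card < (S j).card := by
    intro i j hij hxij
    have hsub : insert i (S i) ⊆ S j := by
      intro k hk
      rcases Finset.mem_insert.1 hk with rfl | hk
      · simp [hS, hij, hxij]
      · simp only [hS, Finset.mem_filter, Finset.mem_univ, true_and] at hk ⊢
        obtain ⟨hki, hxki⟩ := hk
        have hkj : k ≠ j := by
          rintro rfl
          exact ((hone i k hij).1 hxij) hxki
        exact ⟨hkj, htrans k i j hki hij (Ne.symm hkj) hxki hxij⟩
    have hni : i ∉ S i := by simp [hS]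
    calc (S i).card < (insert i (S i)).card := by rw [Finset.card_insert_of_notMem hni]; omega
      _ ≤ (S j).card := Finset.card_le_card hsub
  have hlt : ∀ i : Fin n, (S i).card < n := by
    intro i
    have : S i ⊆ univ.erase i := by
      intro k hk
      simp only [hS, Finset.mem_filter, Finset.mem_univ, true_and] at hk
      exact Finset.mem_erase.2 ⟨hk.1, Finset.mem_univ k⟩
    calc (S i).card ≤ (univ.erase i).card := Finset.card_le_card this
      _ < n := by rw [Finset.card_erase_of_mem (Finset.mem_univ i), Finset.card_univ, Fintype.card_fin]; exact Nat.sub_lt (Fin.pos i) one_pos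
  set F : Fin n → Fin n := fun i => ⟨(S i).card, hlt i⟩ with hF
  have hFinj : Function.Injective F := by
    intro i j h
    by_contra hij
    have h' : (S i).card = (S j).card := Fin.mk.inj_iff.1 h
    rcases h01 (i, j) hij with h0 | h1
    · have : x (j, i) = 1 := by
        have := hsum' i j hij; linarith
      exact absurd h'.symm (Nat.ne_of_lt (hmono j i (Ne.symm hij) this))
    · exact absurd h' (Nat.ne_of_lt (hmono i j hij h1))
  set σ : Equiv.Perm (Fin n) := Equiv.ofBijective F (Finite.injective_iff_bijective.mp hFinj) with hσ
  refine ⟨σ, fun p hp => ?_⟩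
  have hσF : ∀ i, σ i = F i := fun i => rfl
  have key : ∀ i j : Fin n, i ≠ j → (x (i, j) = 1 ↔ σ i < σ j) := by
    intro i j hij
    constructor
    · intro h; exact hmono i j hij h
    · intro h
      by_contra hc
      have : x (j, i) = 1 := (hone j i (Ne.symm hij)).2 hc
      have := hmono j i (Ne.symm hij) this
      exact absurd h (not_lt.2 this.le)
  obtain ⟨i, j⟩ := p
  simp only at hp
  unfold permVec
  simp only
  rcases h01 (i, j) hp with h0 | h1
  · rw [if_neg]
    · exact h0
    · intro hc; rw [← key i j hp] at hc; linarith
  · rw [if_pos ((key i j hp).1 h1)]; exact h1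

lemma sum_sq_eq {n : ℕ} (σ₁ σ₂ : Equiv.Perm (Fin n)) :
    ∑ p ∈ Finset.univ.filter (fun p : Fin n × Fin n => p.1 ≠ p.2),
      (permVec σ₁ p - permVec σ₂ p) ^ 2 = 2 * (kendall σ₁ σ₂ : ℝ) := by
  classical
  set Dp : Fin n × Fin n → Prop := fun p =>
    (σ₁ p.1 < σ₁ p.2 ∧ σ₂ p.2 < σ₂ p.1) ∨ (σ₁ p.2 < σ₁ p.1 ∧ σ₂ p.1 < σ₂ p.2) with hDp
  have hpt : ∀ p : Fin n × Fin n, p.1 ≠ p.2 →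
      (permVec σ₁ p - permVec σ₂ p) ^ 2 = if Dp p then (1 : ℝ) else 0 := by
    intro p hp
    have h1 : σ₁ p.1 ≠ σ₁ p.2 := fun h => hp (σ₁.injective h)
    have h2 : σ₂ p.1 ≠ σ₂ p.2 := fun h => hp (σ₂.injective h)
    unfold permVec
    rcases h1.lt_or_gt with a | a <;> rcases h2.lt_or_gt with b | b
    · have hnd : ¬ Dp p :=
        fun h => h.elim (fun q => absurd q.2 (asymm b)) (fun q => absurd q.1 (asymm a))
      rw [if_pos a, if_pos b, if_neg hnd]; norm_num
    · have hd : Dp p := Or.inl ⟨a, b⟩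
      rw [if_pos a, if_neg (asymm b), if_pos hd]; norm_num
    · have hd : Dp p := Or.inr ⟨a, b⟩
      rw [if_neg (asymm a), if_pos b, if_pos hd]; norm_num
    · have hnd : ¬ Dp p :=
        fun h => h.elim (fun q => absurd q.1 (asymm a)) (fun q => absurd q.2 (asymm b))
      rw [if_neg (asymm a), if_neg (asymm b), if_neg hnd]; norm_num
  have hDne : ∀ p : Fin n × Fin n, Dp p → p.1 ≠ p.2 := by
    rintro p (⟨h, _⟩ | ⟨h, _⟩) heq <;> rw [heq] at h <;> exact lt_irrefl _ h
  rw [Finset.sum_congr rfl (fun p hp => hpt p (Finset.mem_filter.1 hp).2)]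
  rw [Finset.sum_boole, Finset.filter_filter]
  have hset : (Finset.univ.filter fun p : Fin n × Fin n => p.1 ≠ p.2 ∧ Dp p)
      = Finset.univ.filter Dp := by
    apply Finset.filter_congr
    intro p _
    exact ⟨fun h => h.2, fun h => ⟨hDne p h, h⟩⟩
  rw [hset]
  -- split into lt and gt parts
  have hsplit : (Finset.univ.filter Dp) =
      (Finset.univ.filter fun p : Fin n × Fin n => p.1 < p.2 ∧ Dp p) ∪
      (Finset.univ.filter fun p : Fin n × Fin n => p.2 < p.1 ∧ Dp p) := by
    ext p
    simp only [Finset.mem_filter, Finset.mem_union, Finset.mem_univ, true_and]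
    constructor
    · intro h
      rcases (hDne p h).lt_or_gt with hl | hl
      · exact Or.inl ⟨hl, h⟩
      · exact Or.inr ⟨hl, h⟩
    · rintro (⟨_, h⟩ | ⟨_, h⟩) <;> exact h
  have hdisj : Disjoint
      (Finset.univ.filter fun p : Fin n × Fin n => p.1 < p.2 ∧ Dp p)
      (Finset.univ.filter fun p : Fin n × Fin n => p.2 < p.1 ∧ Dp p) := by
    rw [Finset.disjoint_filter]
    rintro p _ ⟨h1, _⟩ ⟨h2, _⟩
    exact absurd (h1.trans h2) (lt_irrefl _)
  have hcards : (Finset.univ.filter fun p : Fin n × Fin n => p.2 < p.1 ∧ Dp p).card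
      = (Finset.univ.filter fun p : Fin n × Fin n => p.1 < p.2 ∧ Dp p).card := by
    apply Finset.card_bij' (fun p _ => Prod.swap p) (fun p _ => Prod.swap p)
    · intro p hp
      simp only [Finset.mem_filter, Finset.mem_univ, true_and, hDp, Prod.fst_swap,
        Prod.snd_swap] at hp ⊢
      exact ⟨hp.1, hp.2.symm⟩
    · intro p hp
      simp only [Finset.mem_filter, Finset.mem_univ, true_and, hDp, Prod.fst_swap,
        Prod.snd_swap] at hp ⊢
      exact ⟨hp.1, hp.2.symm⟩
    · intro p _; exact Prod.swap_swap p
    · intro p _; exact Prod.swap_swap p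
  have hk : kendall σ₁ σ₂
      = (Finset.univ.filter fun p : Fin n × Fin n => p.1 < p.2 ∧ Dp p).card := rfl
  rw [hsplit, Finset.card_union_of_disjoint hdisj, hcards, hk]
  push_cast
  ring

lemma opt_transfer {n : ℕ} {a x : Fin n × Fin n → ℝ} {σ : Equiv.Perm (Fin n)}
    (hx : LOPOpt a x) (h : ∀ p : Fin n × Fin n, p.1 ≠ p.2 → x p = permVec σ p) :
    LOPOptPerm a σ := by
  refine ⟨permVec_feas σ, fun x' hx' => ?_⟩
  have heq : (∑ p ∈ Finset.univ.filter fun p : Fin n × Fin n => p.1 ≠ p.2, a p * permVec σ p)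
      = ∑ p ∈ Finset.univ.filter fun p : Fin n × Fin n => p.1 ≠ p.2, a p * x p :=
    Finset.sum_congr rfl fun p hp => by rw [h p (Finset.mem_filter.1 hp).2]
  rw [heq]
  exact hx.2 x' hx'

theorem stmt16 {n : ℕ} (hn : 2 ≤ n) (a : Fin n × Fin n → ℝ)
    (D : ℝ) (K : ℕ)
    (hD : IsGreatest {r : ℝ | ∃ x y, LOPOpt a x ∧ LOPOpt a y ∧
      r = ∑ p ∈ Finset.univ.filter fun p : Fin n × Fin n => p.1 ≠ p.2,
        (x p - y p) ^ 2} D)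
    (hK : IsGreatest {k : ℕ | ∃ σ₁ σ₂ : Equiv.Perm (Fin n),
      LOPOptPerm a σ₁ ∧ LOPOptPerm a σ₂ ∧ k = kendall σ₁ σ₂} K) :
    D = 2 * (K : ℝ) := by
  obtain ⟨⟨x, y, hxo, hyo, hDeq⟩, hDub⟩ := hD
  obtain ⟨⟨σ₁, σ₂, h1, h2, hKeq⟩, hKub⟩ := hK
  -- D ≤ 2K
  obtain ⟨σx, hσx⟩ := exists_perm hxo.1
  obtain ⟨σy, hσy⟩ := exists_perm hyo.1
  have hDval : D = 2 * (kendall σx σy : ℝ) := by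
    rw [hDeq, ← sum_sq_eq σx σy]
    refine Finset.sum_congr rfl fun p hp => ?_
    have hp' := (Finset.mem_filter.1 hp).2
    rw [hσx p hp', hσy p hp']
  have hle1 : D ≤ 2 * (K : ℝ) := by
    have : kendall σx σy ≤ K :=
      hKub ⟨σx, σy, opt_transfer hxo hσx, opt_transfer hyo hσy, rfl⟩
    rw [hDval]
    have : (kendall σx σy : ℝ) ≤ (K : ℝ) := Nat.cast_le.2 this
    linarith
  -- 2K ≤ D
  have hmem : (2 * (K : ℝ)) ∈ {r : ℝ | ∃ x y, LOPOpt a x ∧ LOPOpt a y ∧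
      r = ∑ p ∈ Finset.univ.filter fun p : Fin n × Fin n => p.1 ≠ p.2,
        (x p - y p) ^ 2} := by
    refine ⟨permVec σ₁, permVec σ₂, h1, h2, ?_⟩
    rw [sum_sq_eq σ₁ σ₂, hKeq]
  have hle2 : 2 * (K : ℝ) ≤ D := hDub hmem
  linarith
end
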